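/- For γ = −1, the family of vector fields on ℝ² given by L_n = e^{−nt} ∂_t + γ e^{−nt}[e^{nx} − (e^{x}−γ)^{n}](e^{x}−γ)^{1−n} ∂_x, i.e. L_n = e^{−nt} ∂_t − e^{−nt}[e^{nx} − (e^{x}+1)^{n}](e^{x}+1)^{1−n} ∂_x (n ∈ ℤ), is a realization of the Witt algebra: [L_m, L_n] = (m−n)L_{m+n} for all m, n ∈ ℤ. (This is the realization 𝔚₆ of Theorem 1 with γ = −1, for which the coefficients are smooth on all of ℝ².) -/

import Mathlib

/-- Lie bracket of smooth vector fields on `ℝ²` (coordinates `(t,x)`), identified with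
`C^∞` maps `ℝ² → ℝ²`: `[X,Y](p) = (DY)(p)(X(p)) - (DX)(p)(Y(p))`. -/
noncomputable def lieBracket2 (X Y : ℝ × ℝ → ℝ × ℝ) : ℝ × ℝ → ℝ × ℝ :=
  fun p => fderiv ℝ Y p (X p) - fderiv ℝ X p (Y p)

/-- The realization `𝔚₆` with `γ = -1`:
`L_n = e^{-nt} ∂_t - e^{-nt}[e^{nx} - (e^x+1)^n](e^x+1)^{1-n} ∂_x`. -/
noncomputable def W6field (n : ℤ) : ℝ × ℝ → ℝ × ℝ := fun p =>
  (Real.exp (-(n : ℝ) * p.1),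
   -(Real.exp (-(n : ℝ) * p.1) *
      (Real.exp ((n : ℝ) * p.2) - (Real.exp p.2 + 1) ^ n) * (Real.exp p.2 + 1) ^ (1 - n)))

/-! Each `L_n` has the form `e^{-nt} (∂_t + k_n(x) ∂_x)`, and for fields of this shape
`[L_m, L_n] = e^{-(m+n)t} ((m - n) ∂_t + (k_m k_n' - k_n k_m' + m k_m - n k_n) ∂_x)`, so the Witt
relations reduce to the identity `k_m k_n' - k_n k_m' + m k_m - n k_n = (m - n) k_{m+n}`.
Writing `k_n = (eˣ + 1)(1 - e^{ny})` with `y = x - log (eˣ + 1)`, the terms in `eˣ` cancel and,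
since `e^{(m+n)y} = e^{my} e^{ny}`, what remains is a polynomial identity. -/

open Real

noncomputable def expTimeField (n : ℤ) (k : ℝ → ℝ) : ℝ × ℝ → ℝ × ℝ := fun p =>
  (exp (-n * p.1), exp (-n * p.1) * k p.2)

section expTimeField

variable {k k' : ℝ → ℝ}

theorem fderiv_expTimeField_apply (hk : ∀ x, HasDerivAt k (k' x) x) (n : ℤ) (p q : ℝ × ℝ) :
    fderiv ℝ (expTimeField n k) p q =
      (-n * exp (-n * p.1) * q.1,
        exp (-n * p.1) * (k' p.2 * q.2 - n * k p.2 * q.1)) := by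
  have hexp : HasFDerivAt (fun q : ℝ × ℝ => exp (-n * q.1))
      ((-n * exp (-n * p.1)) • ContinuousLinearMap.fst ℝ ℝ ℝ) p := by
    have hφ : HasDerivAt (fun t => exp (-n * t)) (-n * exp (-n * p.1)) p.1 := by
      simpa [mul_comm] using ((hasDerivAt_id p.1).const_mul (-(n : ℝ))).exp
    exact hφ.comp_hasFDerivAt p hasFDerivAt_fst
  have hcoeff : HasFDerivAt (fun q : ℝ × ℝ => k q.2) (k' p.2 • ContinuousLinearMap.snd ℝ ℝ ℝ) p :=
    (hk p.2).comp_hasFDerivAt p hasFDerivAt_snd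
  have hfield : HasFDerivAt (expTimeField n k)
      (((-n * exp (-n * p.1)) • ContinuousLinearMap.fst ℝ ℝ ℝ).prod
        (exp (-n * p.1) • k' p.2 • ContinuousLinearMap.snd ℝ ℝ ℝ
          + k p.2 • (-n * exp (-n * p.1)) • ContinuousLinearMap.fst ℝ ℝ ℝ)) p :=
    hexp.prodMk (hexp.mul hcoeff)
  rw [hfield.fderiv]
  simp only [ContinuousLinearMap.prod_apply, add_apply, smul_apply,
    ContinuousLinearMap.coe_fst', ContinuousLinearMap.coe_snd', smul_eq_mul, Prod.mk.injEq]
  exact ⟨trivial, by ring⟩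

theorem lieBracket2_expTimeField {l l' : ℝ → ℝ} (hk : ∀ x, HasDerivAt k (k' x) x)
    (hl : ∀ x, HasDerivAt l (l' x) x) (m n : ℤ) (p : ℝ × ℝ) :
    lieBracket2 (expTimeField m k) (expTimeField n l) p =
      exp (-(m + n : ℤ) * p.1) • ((m - n : ℝ),
        k p.2 * l' p.2 - l p.2 * k' p.2 + m * k p.2 - n * l p.2) := by
  have hexp : exp (-(m + n : ℤ) * p.1) = exp (-m * p.1) * exp (-n * p.1) := by
    rw [← exp_add]
    push_cast
    ring_nf
  simp only [lieBracket2, fderiv_expTimeField_apply hk, fderiv_expTimeField_apply hl,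
    expTimeField, hexp, Prod.mk_sub_mk, Prod.smul_mk, smul_eq_mul, Prod.mk.injEq]
  constructor <;> ring

end expTimeField

theorem lieBracket2_expTimeField_eq_smul {k k' : ℤ → ℝ → ℝ}
    (hk : ∀ n x, HasDerivAt (k n) (k' n x) x)
    (hwitt : ∀ (m n : ℤ) x,
      k m x * k' n x - k n x * k' m x + m * k m x - n * k n x = (m - n) * k (m + n) x)
    (m n : ℤ) :
    lieBracket2 (expTimeField m (k m)) (expTimeField n (k n)) =
      fun p => ((m : ℝ) - n) • expTimeField (m + n) (k (m + n)) p := by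
  funext p
  rw [lieBracket2_expTimeField (hk m) (hk n), hwitt]
  simp only [expTimeField, Prod.smul_mk, smul_eq_mul, Prod.mk.injEq]
  constructor <;> ring

/-- In the coordinate `y = x - log (eˣ + 1)`, for which `dy/dx = 1 / (eˣ + 1)`, the field `W6field n`
becomes `e^{-nt} (∂_t + (1 - e^{ny}) ∂_y)`. -/
noncomputable def w6Coeff (n : ℤ) (x : ℝ) : ℝ :=
  (exp x + 1) * (1 - exp (n * (x - log (exp x + 1))))

noncomputable def w6Coeff' (n : ℤ) (x : ℝ) : ℝ :=
  exp x * (1 - exp (n * (x - log (exp x + 1)))) - n * exp (n * (x - log (exp x + 1)))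

theorem hasDerivAt_w6Coeff (n : ℤ) (x : ℝ) : HasDerivAt (w6Coeff n) (w6Coeff' n x) x := by
  have hs : exp x + 1 ≠ 0 := by positivity
  have hsum : HasDerivAt (fun x => exp x + 1) (exp x) x := (hasDerivAt_exp x).add_const 1
  have hy : HasDerivAt (fun x => x - log (exp x + 1)) (1 - exp x / (exp x + 1)) x :=
    (hasDerivAt_id x).sub (hsum.log hs)
  refine (hsum.mul ((hy.const_mul (n : ℝ)).exp.const_sub 1)).congr_deriv ?_
  rw [w6Coeff']
  field_simp
  ring

theorem w6Coeff_witt (m n : ℤ) (x : ℝ) :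
    w6Coeff m x * w6Coeff' n x - w6Coeff n x * w6Coeff' m x + m * w6Coeff m x - n * w6Coeff n x
      = (m - n) * w6Coeff (m + n) x := by
  have hexp : exp ((m + n : ℤ) * (x - log (exp x + 1)))
      = exp (m * (x - log (exp x + 1))) * exp (n * (x - log (exp x + 1))) := by
    rw [← exp_add]
    push_cast
    ring_nf
  simp only [w6Coeff, w6Coeff', hexp]
  ring

theorem W6field_eq_expTimeField (n : ℤ) : W6field n = expTimeField n (w6Coeff n) := by
  funext p
  have hs : 0 < exp p.2 + 1 := by positivity
  have hpow : (exp p.2 + 1) ^ n = exp (n * log (exp p.2 + 1)) := by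
    rw [← rpow_intCast, rpow_def_of_pos hs, mul_comm]
  simp only [W6field, expTimeField, w6Coeff, Prod.mk.injEq, mul_sub, exp_sub, ← hpow,
    zpow_sub₀ hs.ne', zpow_one]
  refine ⟨trivial, ?_⟩
  field_simp
  ring

theorem W6_realization :
    ∀ m n : ℤ, lieBracket2 (W6field m) (W6field n)
      = fun p => ((m : ℝ) - (n : ℝ)) • W6field (m + n) p := by
  intro m n
  simp only [W6field_eq_expTimeField]
  exact lieBracket2_expTimeField_eq_smul hasDerivAt_w6Coeff w6Coeff_witt m n
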